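/- Let f be a positive continuous function on B(1/2) = {x ∈ ℝ² : ‖x‖_∞ ≤ 1/2} with f(x₁,x₂) = f(x₂,x₁) = f(−x₁,x₂), and for each even positive integer M let q_M(x) = c_M f(x/M) u_M(x) with c_M > 0 chosen so that ∑_x q_M(x) = 1, and let φ_M(θ) = ∑_{x ∈ ℤ²} e^{iθ·x} q_M(x). Set c̄ = sup_M c_M (which is finite). Then for every ε > 0 there exists a finite constant A (depending on ε) such that limsup_{M→∞} sup_{θ ∈ B(π) \ B(A/M)} φ_M(θ) ≤ ε c̄ (1 + 20 ‖f‖_∞). -/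

import Mathlib

open Filter MeasureTheory Real Finset
open scoped BigOperators

noncomputable section

/-- `T_k = (−k/2, k/2]² ∩ ℤ²`. -/
def Tset (k : ℝ) : Finset (ℤ × ℤ) :=
  Finset.Ioc ⌊-k / 2⌋ ⌊k / 2⌋ ×ˢ Finset.Ioc ⌊-k / 2⌋ ⌊k / 2⌋

/-- `Λ_k = [−k/2, k/2]² ∩ ℤ²`. -/
def Lam (k : ℝ) : Finset (ℤ × ℤ) :=
  Finset.Icc ⌈-k / 2⌉ ⌊k / 2⌋ ×ˢ Finset.Icc ⌈-k / 2⌉ ⌊k / 2⌋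

open scoped Classical in
/-- `D_k = {x ∈ ℤ² : |x| ≤ k/2}` (Euclidean norm). -/
def Dset (k : ℝ) : Finset (ℤ × ℤ) :=
  (Lam k).filter fun x => Real.sqrt ((x.1 : ℝ) ^ 2 + (x.2 : ℝ) ^ 2) ≤ k / 2

/-- sup (ℓ∞) norm on ℝ². -/
def supNorm (θ : ℝ × ℝ) : ℝ := max |θ.1| |θ.2|

/-- the closed ℓ∞-ball `B(r)` in ℝ². -/
def Bset (r : ℝ) : Set (ℝ × ℝ) := {θ | supNorm θ ≤ r}

/-- squared Euclidean norm `|θ|²` on ℝ². -/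
def sqNormR (θ : ℝ × ℝ) : ℝ := θ.1 ^ 2 + θ.2 ^ 2

/-- squared Euclidean norm `|y|²` of a lattice point. -/
def sqNorm (y : ℤ × ℤ) : ℝ := (y.1 : ℝ) ^ 2 + (y.2 : ℝ) ^ 2

/-- dot product `θ · x` of θ ∈ ℝ² and x ∈ ℤ². -/
def dotP (θ : ℝ × ℝ) (x : ℤ × ℤ) : ℝ := θ.1 * x.1 + θ.2 * x.2

/-- `e^{iθ·x}`. -/
def cexp (θ : ℝ × ℝ) (x : ℤ × ℤ) : ℂ := Complex.exp (Complex.I * (dotP θ x : ℂ))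

/-- `e^{2πi x·y/L}`. -/
def eL (L : ℕ) (x y : ℤ × ℤ) : ℂ :=
  Complex.exp (2 * (π : ℂ) * Complex.I * ((x.1 * y.1 + x.2 * y.2 : ℤ) : ℂ) / (L : ℂ))

/-- the filter of large even natural numbers. -/
def evenAtTop : Filter ℕ := Filter.atTop ⊓ Filter.principal {n | Even n}

/-- the Fourier point `2πy/L ∈ ℝ²`. -/
def fourierTheta (L : ℕ) (y : ℤ × ℤ) : ℝ × ℝ := (2 * π * y.1 / L, 2 * π * y.2 / L)

/-- the characteristic function `φ(θ) = ∑_x e^{iθ·x} q(x)` of a jump distribution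
supported in `Λ_m`; it is real-valued by symmetry, so we take the real part. -/
def phiOf (m : ℕ) (qq : ℤ × ℤ → ℝ) (θ : ℝ × ℝ) : ℝ :=
  (∑ x ∈ Lam m, cexp θ x * (qq x : ℂ)).re

/-- Condition (P0): `q` is a symmetric probability distribution supported in
`Λ'_m = Λ_m \ {0}`, with values in [0,1] and equal, positive coordinate variances. -/
def CondP0 (m : ℕ) (qq : ℤ × ℤ → ℝ) : Prop :=
  (∀ x, 0 ≤ qq x ∧ qq x ≤ 1) ∧
  (∀ x, x ∉ (Lam m).erase 0 → qq x = 0) ∧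
  (∑ x ∈ (Lam m).erase 0, qq x = 1) ∧
  (∀ x, qq (-x) = qq x) ∧
  (∑ x ∈ Lam m, (x.1 : ℝ) ^ 2 * qq x = ∑ x ∈ Lam m, (x.2 : ℝ) ^ 2 * qq x) ∧
  (0 < ∑ x ∈ Lam m, (x.1 : ℝ) ^ 2 * qq x)

/-- Condition (P1) with constant `σ² = σ2`. -/
def CondP1 (M : ℕ → ℕ) (q : ℕ → ℤ × ℤ → ℝ) (σ2 : ℝ) : Prop :=
  ∀ ε > (0 : ℝ), ∃ δ > (0 : ℝ), ∀ᶠ L in evenAtTop, ∀ θ : ℝ × ℝ, θ ≠ 0 →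
    supNorm θ ≤ δ / M L →
    (1 - phiOf (M L) (q L) θ) / (σ2 * (M L : ℝ) ^ 2 * sqNormR θ / 2)
      ∈ Set.Ioo (1 - ε) (1 + ε)

/-- Condition (P2). -/
def CondP2 (M : ℕ → ℕ) (q : ℕ → ℤ × ℤ → ℝ) : Prop :=
  ∀ δ > (0 : ℝ), ∃ δ' > (0 : ℝ), ∃ ζ > (0 : ℝ), ∀ᶠ L in evenAtTop, ∀ θ : ℝ × ℝ,
    supNorm θ ≤ δ' → ¬ supNorm θ ≤ δ / M L → 1 - phiOf (M L) (q L) θ > ζ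

/-- Condition (P3). -/
def CondP3 (M : ℕ → ℕ) (q : ℕ → ℤ × ℤ → ℝ) : Prop :=
  ∀ ε > (0 : ℝ), ∀ a > (0 : ℝ), ∀ᶠ L in evenAtTop, ∀ θ : ℝ × ℝ,
    supNorm θ ≤ π → ¬ supNorm θ ≤ a → |phiOf (M L) (q L) θ| < ε

/-- `G_L(x,λ) = L⁻² ∑_{y ∈ T_L} e^{2πi x·y/L} / (1 + λ − φ_{M_L}(2πy/L))`. -/
def Gfun (M : ℕ → ℕ) (q : ℕ → ℤ × ℤ → ℝ) (L : ℕ) (x : ℤ × ℤ) (lam : ℝ) : ℂ :=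
  ((L : ℂ) ^ 2)⁻¹ * ∑ y ∈ Tset L,
    eL L x y / ((1 + lam - phiOf (M L) (q L) (fourierTheta L y) : ℝ) : ℂ)

open scoped Classical in
/-- the annulus `A_L(α, v)`. -/
def Aset (L : ℕ) (α v : ℝ) : Finset (ℤ × ℤ) :=
  if α = 0 then (Tset v).erase 0
  else if α = 1 then Tset L \ Tset (L / v)
  else Tset ((L : ℝ) ^ α * v) \ Tset ((L : ℝ) ^ α / v)

/-- the uniform distribution `u_m` on `Λ'_m = Λ_m \ {0}`. -/
def uunif (m : ℕ) (x : ℤ × ℤ) : ℝ :=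
  if x ∈ (Lam m).erase 0 then (((Lam m).erase 0).card : ℝ)⁻¹ else 0

/-- `q_M(x) = c_M f(x/M) u_M(x)`. -/
def qMf (f : ℝ × ℝ → ℝ) (c : ℕ → ℝ) (m : ℕ) (x : ℤ × ℤ) : ℝ :=
  c m * f ((x.1 : ℝ) / m, (x.2 : ℝ) / m) * uunif m x

/-!
Up to the factor `c_M / |Λ'_M|`, `φ_M(θ)` is the sum `∑_{x ∈ Λ_M} f(x/M) e^{iθ·x}` minus its term
at `x = 0`. Say `|θ₁| > A/M` (otherwise swap the coordinates). Let `δ` be a modulus of uniform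
continuity of `f` for `ε/2` and cut every row of `Λ_M` into at most `4/δ` blocks of at most
`δM` consecutive points. On a block `f(x/M)` is within `ε/2` of a constant, and the geometric sum
of `e^{iθ₁x₁}` over the block is at most `2/|e^{iθ₁} - 1| ≤ π/|θ₁| < πM/A`. With `A = 4π/(δε)`
each row contributes at most `εM‖f‖_∞ + εM`, and dividing the `M + 1` rows by `|Λ'_M| ≈ M²`
gives `|φ_M(θ)| ≤ c_M ε (1 + ‖f‖_∞)`.
-/

open Complex in
theorem mul_abs_le_norm_exp_I_mul_sub_one {t : ℝ} (ht : |t| ≤ π) :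
    2 / π * |t| ≤ ‖exp (I * t) - 1‖ := by
  have hhalf : |t / 2| ≤ π / 2 := by rw [abs_div, abs_two]; linarith
  rw [norm_exp_I_mul_ofReal_sub_one, norm_mul, Real.norm_eq_abs, Real.norm_eq_abs, abs_two,
    Real.abs_sin_eq_sin_abs_of_abs_le_pi (by linarith [Real.pi_pos])]
  rw [abs_div, abs_two] at hhalf ⊢
  linarith [Real.mul_le_sin (by positivity) hhalf]

open Complex in
theorem two_div_norm_exp_I_mul_sub_one_le {t : ℝ} (ht0 : t ≠ 0) (ht : |t| ≤ π) :
    2 / ‖exp (I * t) - 1‖ ≤ π / |t| := by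
  have hpos : 0 < 2 / π * |t| := by positivity
  calc 2 / ‖exp (I * t) - 1‖ ≤ 2 / (2 / π * |t|) :=
        div_le_div_of_nonneg_left zero_le_two hpos (mul_abs_le_norm_exp_I_mul_sub_one ht)
    _ = π / |t| := by field_simp

theorem norm_geom_sum_Ico_le {z : ℂ} (hz : z ≠ 1) (hz1 : ‖z‖ = 1) {a b : ℕ} (hab : a ≤ b) :
    ‖∑ t ∈ Ico a b, z ^ t‖ ≤ 2 / ‖z - 1‖ := by
  rw [geom_sum_Ico hz hab, norm_div]
  gcongr
  calc ‖z ^ b - z ^ a‖ ≤ ‖z ^ b‖ + ‖z ^ a‖ := norm_sub_le _ _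
    _ = 2 := by rw [norm_pow, norm_pow, hz1, one_pow]; norm_num

theorem norm_sum_range_mul_pow_le {z : ℂ} (hz : z ≠ 1) (hz1 : ‖z‖ = 1) {G : ℕ → ℂ} {S e : ℝ}
    {n l N : ℕ} (hS0 : 0 ≤ S) (hnl : n ≤ N * l) (hS : ∀ t < n, ‖G t‖ ≤ S)
    (hosc : ∀ s t, s ≤ t → t < n → t < s + l → ‖G t - G s‖ ≤ e) :
    ‖∑ t ∈ range n, G t * z ^ t‖ ≤ N * (2 / ‖z - 1‖ * S) + e * n := by
  set C := 2 / ‖z - 1‖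
  have hCS : 0 ≤ C * S := by positivity
  have hblock : ∀ s n', s < n' → n' ≤ n → n' ≤ s + l →
      ‖∑ t ∈ Ico s n', G t * z ^ t‖ ≤ C * S + e * ((n' : ℝ) - s) := by
    intro s n' hsn hn' hl
    have hsplit : ∑ t ∈ Ico s n', G t * z ^ t
        = G s * ∑ t ∈ Ico s n', z ^ t + ∑ t ∈ Ico s n', (G t - G s) * z ^ t := by
      rw [mul_sum, ← sum_add_distrib]
      exact sum_congr rfl fun t _ => by ring
    have hosc' : ∀ t ∈ Ico s n', ‖(G t - G s) * z ^ t‖ ≤ e := fun t ht => by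
      rw [mem_Ico] at ht
      rw [norm_mul, norm_pow, hz1, one_pow, mul_one]
      exact hosc s t ht.1 (by omega) (by omega)
    calc ‖∑ t ∈ Ico s n', G t * z ^ t‖
        ≤ ‖G s‖ * ‖∑ t ∈ Ico s n', z ^ t‖ + ‖∑ t ∈ Ico s n', (G t - G s) * z ^ t‖ := by
          rw [hsplit, ← norm_mul]; exact norm_add_le _ _
      _ ≤ S * C + ∑ t ∈ Ico s n', e := by
          gcongr
          · exact hS s (by omega)
          · exact norm_geom_sum_Ico_le hz hz1 hsn.le
          · exact (norm_sum_le _ _).trans (sum_le_sum hosc')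
      _ = C * S + e * ((n' : ℝ) - s) := by
          rw [sum_const, Nat.card_Ico, nsmul_eq_mul, Nat.cast_sub hsn.le]; ring
  suffices h : ∀ N n', n' ≤ n → n' ≤ N * l →
      ‖∑ t ∈ range n', G t * z ^ t‖ ≤ N * (C * S) + e * n' from h N n le_rfl hnl
  intro N
  induction N with
  | zero => intro n' _ h; simp [Nat.le_zero.mp (by simpa using h)]
  | succ N ih =>
    intro n' hn' hN
    rcases le_or_gt n' (N * l) with h | h
    · calc _ ≤ N * (C * S) + e * n' := ih n' hn' h
        _ ≤ (N + 1 : ℕ) * (C * S) + e * n' := by push_cast; linarith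
    · rw [← sum_range_add_sum_Ico _ h.le]
      calc _ ≤ ‖∑ t ∈ range (N * l), G t * z ^ t‖ + ‖∑ t ∈ Ico (N * l) n', G t * z ^ t‖ :=
            norm_add_le _ _
        _ ≤ (N * (C * S) + e * (N * l : ℕ)) + (C * S + e * ((n' : ℝ) - (N * l : ℕ))) :=
            add_le_add (ih _ (h.le.trans hn') le_rfl)
              (hblock _ _ h hn' (by rw [Nat.succ_mul] at hN; exact hN))
        _ = (N + 1 : ℕ) * (C * S) + e * n' := by push_cast; ring

theorem norm_sum_sum_mul_pow_mul_pow_le {z w : ℂ} (hz : z ≠ 1) (hz1 : ‖z‖ = 1) (hw1 : ‖w‖ = 1)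
    {g : ℕ → ℕ → ℂ} {S e : ℝ} {n l N : ℕ} (hS0 : 0 ≤ S) (hnl : n ≤ N * l)
    (hS : ∀ i < n, ∀ j < n, ‖g i j‖ ≤ S)
    (hosc : ∀ j < n, ∀ i i', i ≤ i' → i' < n → i' < i + l → ‖g i' j - g i j‖ ≤ e) :
    ‖∑ i ∈ range n, ∑ j ∈ range n, g i j * z ^ i * w ^ j‖
      ≤ n * (N * (2 / ‖z - 1‖ * S) + e * n) := by
  rw [sum_comm]
  calc _ ≤ ∑ j ∈ range n, ‖∑ i ∈ range n, g i j * z ^ i * w ^ j‖ := norm_sum_le _ _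
    _ ≤ ∑ j ∈ range n, (N * (2 / ‖z - 1‖ * S) + e * n) := by
        refine sum_le_sum fun j hj => ?_
        rw [mem_range] at hj
        rw [← sum_mul, norm_mul, norm_pow, hw1, one_pow, mul_one]
        exact norm_sum_range_mul_pow_le hz hz1 hS0 hnl (fun i hi => hS i hi j hj)
          (fun i i' hii' hi' hl => hosc j hj i i' hii' hi' hl)
    _ = n * (N * (2 / ‖z - 1‖ * S) + e * n) := by rw [sum_const, card_range, nsmul_eq_mul]

theorem zero_mem_Lam (m : ℕ) : (0 : ℤ × ℤ) ∈ Lam m := by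
  have h1 : ⌈-(m : ℝ) / 2⌉ ≤ 0 := Int.ceil_le.mpr (by push_cast; linarith [m.cast_nonneg (α := ℝ)])
  have h2 : 0 ≤ ⌊(m : ℝ) / 2⌋ := Int.floor_nonneg.mpr (by positivity)
  simp [Lam, mem_product, h1, h2]

theorem Lam_two_mul (k : ℕ) :
    Lam ((2 * k : ℕ) : ℝ) = Icc (-(k : ℤ)) k ×ˢ Icc (-(k : ℤ)) k := by
  have h1 : -((2 * k : ℕ) : ℝ) / 2 = ((-(k : ℤ) : ℤ) : ℝ) := by push_cast; ring
  have h2 : ((2 * k : ℕ) : ℝ) / 2 = ((k : ℤ) : ℝ) := by push_cast; ring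
  rw [Lam, h1, h2, Int.ceil_intCast, Int.floor_intCast]

theorem card_erase_zero_Lam_two_mul (k : ℕ) :
    (((Lam ((2 * k : ℕ) : ℝ)).erase 0).card : ℝ) = (2 * k + 1) ^ 2 - 1 := by
  rw [card_erase_of_mem (zero_mem_Lam _), Lam_two_mul, card_product, Int.card_Icc,
    show ((k : ℤ) + 1 - -(k : ℤ)).toNat = 2 * k + 1 by omega]
  have : 1 ≤ (2 * k + 1) * (2 * k + 1) := Nat.one_le_iff_ne_zero.mpr (by positivity)
  push_cast [Nat.cast_sub this]
  ring

theorem sum_Icc_neg_eq_sum_range {M : Type*} [AddCommMonoid M] (k : ℕ) (F : ℤ → M) :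
    ∑ x ∈ Icc (-(k : ℤ)) k, F x = ∑ i ∈ range (2 * k + 1), F (i - k) := by
  refine sum_nbij' (fun x => (x + k).toNat) (fun i => (i : ℤ) - k) ?_ ?_ ?_ ?_ ?_ <;>
    intro x hx <;> simp only [mem_Icc, mem_range] at hx ⊢
  all_goals first | omega | (congr 1; omega)

def latticeSum (g : ℝ × ℝ → ℝ) (m : ℕ) (θ : ℝ × ℝ) : ℂ :=
  ∑ x ∈ Lam m, (g ((x.1 : ℝ) / m, (x.2 : ℝ) / m) : ℂ) * cexp θ x

theorem norm_cexp (θ : ℝ × ℝ) (x : ℤ × ℤ) : ‖cexp θ x‖ = 1 := by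
  rw [cexp, mul_comm, Complex.norm_exp_ofReal_mul_I]

theorem cexp_swap (θ : ℝ × ℝ) (x : ℤ × ℤ) : cexp θ.swap x.swap = cexp θ x := by
  simp only [cexp, dotP, Prod.fst_swap, Prod.snd_swap, add_comm]

theorem cexp_sub_natCast (θ : ℝ × ℝ) (k i j : ℕ) :
    cexp θ ((i : ℤ) - k, (j : ℤ) - k)
      = cexp θ (-k, -k) * Complex.exp (Complex.I * θ.1) ^ i
          * Complex.exp (Complex.I * θ.2) ^ j := by
  simp only [cexp, dotP, ← Complex.exp_nat_mul, ← Complex.exp_add]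
  push_cast
  ring_nf

theorem abs_phiOf_qMf_le (f : ℝ × ℝ → ℝ) (c : ℕ → ℝ) (m : ℕ) (hc : 0 ≤ c m) (θ : ℝ × ℝ) :
    |phiOf m (qMf f c m) θ|
      ≤ c m / ((Lam m).erase 0).card * (‖latticeSum f m θ‖ + |f 0|) := by
  have hsum : ∑ x ∈ Lam m, cexp θ x * (qMf f c m x : ℂ)
      = (c m / ((Lam m).erase 0).card : ℝ) * (latticeSum f m θ - f 0) := by
    have h0 : cexp θ 0 * (qMf f c m 0 : ℂ) = 0 := by simp [qMf, uunif]
    have hsplit := add_sum_erase (Lam m)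
      (fun x => (f ((x.1 : ℝ) / m, (x.2 : ℝ) / m) : ℂ) * cexp θ x) (zero_mem_Lam m)
    simp only [Prod.fst_zero, Prod.snd_zero, Int.cast_zero, zero_div, Prod.mk_zero_zero] at hsplit
    rw [← sum_erase (f := fun x => cexp θ x * (qMf f c m x : ℂ)) _ h0, latticeSum, ← hsplit,
      show cexp θ 0 = 1 by simp [cexp, dotP], mul_one, add_sub_cancel_left, mul_sum]
    refine sum_congr rfl fun x hx => ?_
    simp only [qMf, uunif, if_pos hx]
    push_cast
    ring
  rw [phiOf, hsum]
  refine (Complex.abs_re_le_norm _).trans ?_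
  rw [norm_mul, Complex.norm_real, Real.norm_of_nonneg (by positivity)]
  gcongr
  exact (norm_sub_le _ _).trans_eq (by rw [Complex.norm_real, Real.norm_eq_abs])

theorem latticeSum_swap (g : ℝ × ℝ → ℝ) (m : ℕ) (θ : ℝ × ℝ) :
    latticeSum g m θ = latticeSum (g ∘ Prod.swap) m θ.swap := by
  refine sum_nbij' Prod.swap Prod.swap ?_ ?_ (fun _ _ => rfl) (fun _ _ => rfl) ?_
  · intro x hx; simp only [Lam, mem_product] at hx ⊢; exact hx.symm
  · intro x hx; simp only [Lam, mem_product] at hx ⊢; exact hx.symm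
  · intro x _; simp [cexp_swap]

theorem latticeSum_two_mul (g : ℝ × ℝ → ℝ) (k : ℕ) (θ : ℝ × ℝ) :
    latticeSum g (2 * k) θ = cexp θ (-k, -k) * ∑ i ∈ range (2 * k + 1), ∑ j ∈ range (2 * k + 1),
      (g ((i - k) / (2 * k), (j - k) / (2 * k)) : ℂ)
        * Complex.exp (Complex.I * θ.1) ^ i * Complex.exp (Complex.I * θ.2) ^ j := by
  rw [latticeSum, Lam_two_mul, sum_product, sum_Icc_neg_eq_sum_range, mul_sum]
  refine sum_congr rfl fun i _ => ?_
  rw [sum_Icc_neg_eq_sum_range, mul_sum]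
  refine sum_congr rfl fun j _ => ?_
  rw [cexp_sub_natCast]
  push_cast
  ring

theorem mem_Bset_half_of_le {k i j : ℕ} (hi : i ≤ 2 * k) (hj : j ≤ 2 * k) :
    (((i : ℝ) - k) / (2 * k), ((j : ℝ) - k) / (2 * k)) ∈ Bset (1 / 2) := by
  have key : ∀ i : ℕ, i ≤ 2 * k → |((i : ℝ) - k) / (2 * k)| ≤ 1 / 2 := by
    intro i hi
    have hi' : (i : ℝ) ≤ 2 * k := by exact_mod_cast hi
    rcases k.eq_zero_or_pos with rfl | hk
    · simp
    · have hk' : (0 : ℝ) < 2 * k := by positivity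
      rw [abs_div, abs_of_pos hk', div_le_iff₀ hk', abs_le]
      constructor <;> linarith [i.cast_nonneg (α := ℝ)]
  exact max_le (key i hi) (key j hj)

theorem norm_latticeSum_le {g : ℝ × ℝ → ℝ} {S e δ : ℝ} (hS0 : 0 ≤ S)
    (hgS : ∀ x ∈ Bset (1 / 2), |g x| ≤ S)
    (hosc : ∀ u ∈ Bset (1 / 2), ∀ v ∈ Bset (1 / 2), dist u v < δ → dist (g u) (g v) ≤ e)
    {k l N : ℕ} (hk : 0 < k) (hl : (l : ℝ) ≤ δ * (2 * k)) (hNl : 2 * k + 1 ≤ N * l)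
    {θ : ℝ × ℝ} (hθ0 : θ.1 ≠ 0) (hθπ : |θ.1| ≤ π) :
    ‖latticeSum g (2 * k) θ‖ ≤ (2 * k + 1) * (N * (π / |θ.1| * S) + e * (2 * k + 1)) := by
  have hz1 := norm_cexp θ (1, 0)
  simp only [cexp, dotP, Int.cast_one, Int.cast_zero, mul_one, mul_zero, add_zero] at hz1
  have hw1 := norm_cexp θ (0, 1)
  simp only [cexp, dotP, Int.cast_one, Int.cast_zero, mul_one, mul_zero, zero_add] at hw1
  have hz : Complex.exp (Complex.I * θ.1) ≠ 1 := fun h => by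
    have := mul_abs_le_norm_exp_I_mul_sub_one hθπ
    rw [h, sub_self, norm_zero] at this
    have : 0 < 2 / π * |θ.1| := by have := Real.pi_pos; positivity
    linarith
  rw [latticeSum_two_mul, norm_mul, norm_cexp, one_mul]
  have hbound := norm_sum_sum_mul_pow_mul_pow_le hz hz1 hw1
    (g := fun i j => (g ((i - k) / (2 * k), (j - k) / (2 * k)) : ℂ)) (e := e) hS0 hNl
    (fun i hi j hj => by
      rw [Complex.norm_real, Real.norm_eq_abs]
      exact hgS _ (mem_Bset_half_of_le (by omega) (by omega)))
    (fun j hj i i' hii' hi' hl => by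
      rw [← Complex.ofReal_sub, Complex.norm_real, Real.norm_eq_abs, ← Real.dist_eq]
      refine hosc _ (mem_Bset_half_of_le (by omega) (by omega)) _
        (mem_Bset_half_of_le (by omega) (by omega)) ?_
      have hk' : (0 : ℝ) < 2 * k := by positivity
      have hil : (i' : ℝ) < i + l := by exact_mod_cast hl
      have hii : (i : ℝ) ≤ i' := by exact_mod_cast hii'
      rw [Prod.dist_eq, dist_self, max_eq_left dist_nonneg, Real.dist_eq, ← sub_div,
        abs_div, abs_of_pos hk', div_lt_iff₀ hk', abs_of_nonneg (by linarith)]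
      linarith)
  push_cast at hbound
  refine hbound.trans ?_
  gcongr _ * (_ * (?_ * _) + _)
  exact two_div_norm_exp_I_mul_sub_one_le hθ0 hθπ

section LargeFrequency

variable {g : ℝ × ℝ → ℝ} {S ε δ : ℝ} {k : ℕ} {θ : ℝ × ℝ}

theorem norm_latticeSum_le_of_lt_abs_fst (hε : 0 < ε) (hδ : 0 < δ) (hδ1 : δ ≤ 1) (hS0 : 0 ≤ S)
    (hgS : ∀ x ∈ Bset (1 / 2), |g x| ≤ S)
    (hosc : ∀ u ∈ Bset (1 / 2), ∀ v ∈ Bset (1 / 2), dist u v < δ → dist (g u) (g v) ≤ ε / 2)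
    (hk : 2 ≤ δ * (2 * k)) (hθπ : |θ.1| ≤ π) (hθ : 4 * π / (δ * ε) / (2 * k) < |θ.1|) :
    ‖latticeSum g (2 * k) θ‖ ≤ (2 * k + 1) * (ε * (2 * k) * S + ε / 2 * (2 * k + 1)) := by
  have hπ := Real.pi_pos
  have hk1 : (1 : ℝ) ≤ k := by nlinarith
  have hk0 : 0 < k := by exact_mod_cast hk1
  set l := ⌊δ * (2 * k)⌋₊
  have hl_le : (l : ℝ) ≤ δ * (2 * k) := Nat.floor_le (by positivity)
  have hl_ge : δ * k ≤ l := by linarith [Nat.lt_floor_add_one (δ * (2 * k))]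
  have hl0 : 0 < l := by exact_mod_cast (show (0 : ℝ) < l by nlinarith)
  set N := (2 * k + 1) / l + 1
  have hNl : 2 * k + 1 ≤ N * l := by
    exact (Nat.lt_mul_div_succ _ hl0).le.trans_eq (mul_comm _ _)
  have hN : (N : ℝ) ≤ 4 / δ := by
    have h1 : (((2 * k + 1) / l : ℕ) : ℝ) ≤ (2 * k + 1 : ℕ) / l := Nat.cast_div_le
    have h2 : ((2 * k + 1 : ℕ) : ℝ) / l ≤ 3 * k / (δ * k) := by
      push_cast
      exact div_le_div₀ (by positivity) (by linarith) (by positivity) hl_ge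
    have h3 : 3 * k / (δ * k) + 1 ≤ 4 / δ := by
      rw [mul_comm δ, ← div_div, mul_div_cancel_right₀ _ (by positivity), div_add_one hδ.ne']
      gcongr; linarith
    simp only [N]; push_cast; linarith
  have hθ0 : θ.1 ≠ 0 := by
    rintro h; rw [h, abs_zero] at hθ; exact absurd hθ (not_lt.mpr (by positivity))
  have hπθ : π / |θ.1| ≤ δ * ε * (2 * k) / (4 * π) * π := by
    rw [div_le_iff₀ (abs_pos.mpr hθ0)]
    rw [div_lt_iff₀ (by positivity), div_lt_iff₀ (by positivity)] at hθ
    field_simp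
    nlinarith
  refine (norm_latticeSum_le hS0 hgS hosc hk0 hl_le hNl hθ0 hθπ).trans ?_
  gcongr _ * (?_ + _)
  calc (N : ℝ) * (π / |θ.1| * S) ≤ 4 / δ * (δ * ε * (2 * k) / (4 * π) * π * S) := by gcongr
    _ = ε * (2 * k) * S := by field_simp

theorem norm_latticeSum_le_of_lt_supNorm (hε : 0 < ε) (hδ : 0 < δ) (hδ1 : δ ≤ 1) (hS0 : 0 ≤ S)
    (hgS : ∀ x ∈ Bset (1 / 2), |g x| ≤ S)
    (hosc : ∀ u ∈ Bset (1 / 2), ∀ v ∈ Bset (1 / 2), dist u v < δ → dist (g u) (g v) ≤ ε / 2)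
    (hk : 2 ≤ δ * (2 * k)) (hθπ : supNorm θ ≤ π) (hθ : 4 * π / (δ * ε) / (2 * k) < supNorm θ) :
    ‖latticeSum g (2 * k) θ‖ ≤ (2 * k + 1) * (ε * (2 * k) * S + ε / 2 * (2 * k + 1)) := by
  rcases lt_max_iff.mp hθ with h1 | h2
  · exact norm_latticeSum_le_of_lt_abs_fst hε hδ hδ1 hS0 hgS hosc hk (le_of_max_le_left hθπ) h1
  · have hswap : ∀ x ∈ Bset (1 / 2), x.swap ∈ Bset (1 / 2) := fun x hx => by
      simpa only [Bset, supNorm, Set.mem_ofPred_eq, Prod.fst_swap, Prod.snd_swap, max_comm] using hx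
    rw [latticeSum_swap]
    refine norm_latticeSum_le_of_lt_abs_fst hε hδ hδ1 hS0 (fun x hx => hgS _ (hswap x hx))
      (fun u hu v hv huv => hosc _ (hswap u hu) _ (hswap v hv) ?_) hk (le_of_max_le_right hθπ) h2
    simpa only [Prod.dist_eq, Prod.fst_swap, Prod.snd_swap, max_comm] using huv

end LargeFrequency

theorem abs_phiOf_qMf_le_of_lt_supNorm {f : ℝ × ℝ → ℝ} {c : ℕ → ℝ} {S ε δ : ℝ} (hε : 0 < ε)
    (hδ : 0 < δ) (hδ1 : δ ≤ 1) (hS0 : 0 ≤ S) (hfS : ∀ x ∈ Bset (1 / 2), |f x| ≤ S)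
    (hosc : ∀ u ∈ Bset (1 / 2), ∀ v ∈ Bset (1 / 2), dist u v < δ → dist (f u) (f v) ≤ ε / 2)
    {k : ℕ} (hk : 2 ≤ δ * (2 * k)) (hkε : 1 ≤ ε * (2 * k)) (hc : 0 ≤ c (2 * k))
    {θ : ℝ × ℝ} (hθπ : supNorm θ ≤ π) (hθ : 4 * π / (δ * ε) / (2 * k) < supNorm θ) :
    |phiOf (2 * k) (qMf f c (2 * k)) θ| ≤ c (2 * k) * (ε * (1 + S)) := by
  have hT := norm_latticeSum_le_of_lt_supNorm hε hδ hδ1 hS0 hfS hosc hk hθπ hθ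
  have hf0 : |f 0| ≤ S := hfS 0 (by simp [Bset, supNorm])
  have hm : (2 : ℝ) ≤ 2 * k := by nlinarith
  refine (abs_phiOf_qMf_le f c _ hc θ).trans ?_
  rw [card_erase_zero_Lam_two_mul, div_mul_eq_mul_div, div_le_iff₀ (by nlinarith), mul_assoc]
  gcongr
  nlinarith [mul_nonneg hS0 (sub_nonneg.mpr hkε),
    mul_nonneg hε.le (by nlinarith : (0 : ℝ) ≤ (2 * k) ^ 2 + 2 * (2 * k) - 1)]

theorem limsup_sSup_image_le {ι α : Type*} {l : Filter ι} [l.NeBot] {g : ι → α → ℝ}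
    {s : ι → Set α} {B : ℝ} (hB : 0 ≤ B) (h : ∀ᶠ i in l, ∀ x ∈ s i, |g i x| ≤ B) :
    limsup (fun i => sSup (g i '' s i)) l ≤ B := by
  have hle : ∀ᶠ i in l, sSup (g i '' s i) ≤ B := h.mono fun i hi =>
    Real.sSup_le (by rintro _ ⟨x, hx, rfl⟩; exact (abs_le.mp (hi x hx)).2) hB
  have hge : ∀ᶠ i in l, -B ≤ sSup (g i '' s i) := h.mono fun i hi => by
    rcases (s i).eq_empty_or_nonempty with hs | ⟨x, hx⟩
    · simp [hs, hB]
    · refine (abs_le.mp (hi x hx)).1.trans (le_csSup ⟨B, ?_⟩ ⟨x, hx, rfl⟩)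
      rintro _ ⟨y, hy, rfl⟩
      exact (abs_le.mp (hi y hy)).2
  exact limsup_le_of_le (isCoboundedUnder_le_of_eventually_le l hge) hle

instance evenAtTop_neBot : evenAtTop.NeBot := by
  refine inf_principal_neBot_iff.mpr fun U hU => ?_
  obtain ⟨N, hN⟩ := mem_atTop_sets.mp hU
  exact ⟨2 * N, hN _ (by omega), even_two_mul N⟩

theorem isCompact_Bset (r : ℝ) : IsCompact (Bset r) := by
  have h : Bset r = Metric.closedBall 0 r := by
    ext θ
    simp [Bset, supNorm, Prod.norm_def]
  exact h ▸ isCompact_closedBall _ _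

theorem abs_le_sSup_image_abs {f : ℝ × ℝ → ℝ} {r : ℝ} (hf : ContinuousOn f (Bset r)) {x : ℝ × ℝ}
    (hx : x ∈ Bset r) : |f x| ≤ sSup ((fun x => |f x|) '' Bset r) :=
  le_csSup ((isCompact_Bset r).image_of_continuousOn hf.abs).bddAbove ⟨x, hx, rfl⟩

theorem exists_dist_le_of_continuousOn_Bset {f : ℝ × ℝ → ℝ} {r e : ℝ}
    (hf : ContinuousOn f (Bset r)) (he : 0 < e) : ∃ δ, 0 < δ ∧ δ ≤ 1 ∧
      ∀ u ∈ Bset r, ∀ v ∈ Bset r, dist u v < δ → dist (f u) (f v) ≤ e := by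
  obtain ⟨η, hη, hfη⟩ := Metric.uniformContinuousOn_iff.mp
    ((isCompact_Bset r).uniformContinuousOn_of_continuous hf) e he
  exact ⟨min η 1, lt_min hη one_pos, min_le_right _ _,
    fun u hu v hv h => (hfη u hu v hv (h.trans_le (min_le_left _ _))).le⟩

theorem prop_suff_P3_general (f : ℝ × ℝ → ℝ) (c : ℕ → ℝ)
    (hfcont : ContinuousOn f (Bset (1 / 2)))
    (hcpos : ∀ m : ℕ, Even m → 0 < m → 0 < c m)
    (cbar : ℝ) (hcbar : IsLUB {y : ℝ | ∃ m : ℕ, Even m ∧ 0 < m ∧ y = c m} cbar) :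
    ∀ ε > (0 : ℝ), ∃ A : ℝ,
      Filter.limsup
          (fun m : ℕ => sSup (phiOf m (qMf f c m) '' (Bset π \ Bset (A / m))))
          evenAtTop
        ≤ ε * cbar * (1 + 20 * sSup ((fun x => |f x|) '' Bset (1 / 2))) := by
  intro ε hε
  set S := sSup ((fun x => |f x|) '' Bset (1 / 2))
  have hfS : ∀ x ∈ Bset (1 / 2), |f x| ≤ S := fun x hx => abs_le_sSup_image_abs hfcont hx
  have hS0 : 0 ≤ S := (abs_nonneg _).trans (hfS 0 (by simp [Bset, supNorm]))
  obtain ⟨δ, hδ, hδ1, hosc⟩ := exists_dist_le_of_continuousOn_Bset hfcont (half_pos hε)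
  have hcbar0 : 0 < cbar :=
    (hcpos 2 even_two two_pos).trans_le (hcbar.1 ⟨2, even_two, two_pos, rfl⟩)
  refine ⟨4 * π / (δ * ε), ?_⟩
  calc _ ≤ ε * cbar * (1 + S) := limsup_sSup_image_le (by positivity) ?_
    _ ≤ ε * cbar * (1 + 20 * S) := by gcongr; linarith
  rw [evenAtTop, eventually_inf_principal]
  filter_upwards [tendsto_natCast_atTop_atTop.eventually_ge_atTop (max (2 / δ) (1 / ε))]
    with m hm ⟨k, hmk⟩ θ ⟨hθπ, hθ⟩
  rw [hmk, ← two_mul] at hm hθ ⊢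
  push_cast at hm hθ
  have hk : 2 ≤ δ * (2 * k) := (div_le_iff₀' hδ).mp (le_of_max_le_left hm)
  have hkε : 1 ≤ ε * (2 * k) := (div_le_iff₀' hε).mp (le_of_max_le_right hm)
  have hk0 : 0 < 2 * k := by exact_mod_cast (show (0 : ℝ) < 2 * k by nlinarith)
  calc |phiOf (2 * k) (qMf f c (2 * k)) θ| ≤ c (2 * k) * (ε * (1 + S)) :=
        abs_phiOf_qMf_le_of_lt_supNorm hε hδ hδ1 hS0 hfS hosc hk hkε
          (hcpos _ (even_two_mul k) hk0).le hθπ (not_le.mp hθ)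
    _ ≤ cbar * (ε * (1 + S)) := by gcongr; exact hcbar.1 ⟨_, even_two_mul k, hk0, rfl⟩
    _ = ε * cbar * (1 + S) := by ring

/-- With `c̄ = sup_M c_M` (over even positive `M`), for every `ε > 0` there exists a
finite constant `A` such that
`limsup_{M→∞} sup_{θ ∈ B(π)\B(A/M)} φ_M(θ) ≤ ε c̄ (1 + 20‖f‖_∞)`. -/
theorem prop_suff_P3 (f : ℝ × ℝ → ℝ) (c : ℕ → ℝ)
    (hfpos : ∀ x ∈ Bset (1 / 2), 0 < f x)
    (hfcont : ContinuousOn f (Bset (1 / 2)))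
    (hfsym1 : ∀ x ∈ Bset (1 / 2), f (x.1, x.2) = f (x.2, x.1))
    (hfsym2 : ∀ x ∈ Bset (1 / 2), f (x.1, x.2) = f (-x.1, x.2))
    (hcpos : ∀ m : ℕ, Even m → 0 < m → 0 < c m)
    (hcsum : ∀ m : ℕ, Even m → 0 < m → ∑ x ∈ (Lam m).erase 0, qMf f c m x = 1)
    (cbar : ℝ) (hcbar : IsLUB {y : ℝ | ∃ m : ℕ, Even m ∧ 0 < m ∧ y = c m} cbar) :
    ∀ ε > (0 : ℝ), ∃ A : ℝ,
      Filter.limsup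
          (fun m : ℕ => sSup (phiOf m (qMf f c m) '' (Bset π \ Bset (A / m))))
          evenAtTop
        ≤ ε * cbar * (1 + 20 * sSup ((fun x => |f x|) '' Bset (1 / 2))) :=
  prop_suff_P3_general f c hfcont hcpos cbar hcbar
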